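/- arXiv:1610.06851 — 2 statements merged into one kernel-verified Lean document; each statement's English description precedes it below -/
import Mathlib

section
/- Let X be a GC_{d,n} set in R^d with n ≥ 1 and d ≥ 1. Then for each point p ∈ X, the linear parts (at p) of the affine-linear factors, taken over all factors l of the polynomials Q_q (q ≠ p) with l(p) = 0, span a d-dimensional space; equivalently, there are d such factors vanishing at p whose linear parts are linearly independent. -/
/-!
Suppose the linear parts of the factors vanishing at `p` lie in a proper subspace, and pick
`w ≠ 0` orthogonal to it. Every such factor is then constant along `w`, so each `Q_q` with
`q ≠ p` also vanishes at `p + w`. Since `|X|` is at least the dimension of the polynomials of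
degree `≤ n`, the `Q_q` form a Lagrange basis of that space; in particular the affine form
`f x = w ⬝ᵥ (x - p)` equals `∑ q, f q • Q_q`. Evaluating at `p + w` gives
`w ⬝ᵥ w = f p • Q_p (p + w) = 0`, a contradiction.
-/

theorem exists_ne_zero_dotProduct_eq_zero_of_span_ne_top {σ K : Type*} [Field K] [Fintype σ]
    {S : Set (σ → K)} (h : Submodule.span K S ≠ ⊤) : ∃ w ≠ 0, ∀ v ∈ S, v ⬝ᵥ w = 0 := by
  classical
  obtain ⟨φ, hφ0, hφ⟩ := (Submodule.span K S).exists_le_ker_of_lt_top h.lt_top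
  refine ⟨(dotProductEquiv K σ).symm φ, fun hw => hφ0 ?_, fun v hv => ?_⟩
  · simpa using congrArg (dotProductEquiv K σ) hw
  · rw [dotProduct_comm, ← dotProductEquiv_apply_apply, LinearEquiv.apply_symm_apply]
    exact hφ (Submodule.subset_span hv)

namespace MvPolynomial

variable {σ : Type*}

theorem finrank_restrictTotalDegree_le [Fintype σ] (R : Type*) [CommRing R] [Nontrivial R]
    (n : ℕ) :
    Module.finrank R (restrictTotalDegree σ R n) ≤ (n + Fintype.card σ).choose (Fintype.card σ) := by
  classical
  -- a monomial of degree `≤ n` in `σ` is padded by a power of an extra variable to degree `n`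
  let homogenize : {m : σ →₀ ℕ | (m.sum fun _ e => e) ≤ n} →
      {P : Option σ →₀ ℕ // P.sum (fun _ ↦ id) = n} := fun m =>
    ⟨m.1.optionElim (n - m.1.sum fun _ e => e), by
      rw [Finsupp.sum_option_index _ _ (fun _ => rfl) (fun _ _ _ => rfl)]
      simp only [Finsupp.optionElim_apply_eq_elim, Option.elim_none, Finsupp.some_optionElim, id]
      exact Nat.sub_add_cancel m.2⟩
  have hinj : Function.Injective homogenize := fun m m' h => by
    have := congrArg (fun P => Finsupp.some P.1) h
    exact Subtype.ext (by simpa [homogenize] using this)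
  calc Module.finrank R (restrictTotalDegree σ R n)
      = Nat.card {m : σ →₀ ℕ | (m.sum fun _ e => e) ≤ n} :=
        Module.finrank_eq_nat_card_basis (basisRestrictSupport R _)
    _ ≤ Nat.card (Sym (Option σ) n) :=
        Nat.card_le_card_of_injective _ ((Sym.equivNatSum _ n).symm.injective.comp hinj)
    _ = (n + Fintype.card σ).choose (Fintype.card σ) := by
        rw [Nat.card_eq_fintype_card, Sym.card_sym_eq_choose, Fintype.card_option,
          show Fintype.card σ + 1 + n - 1 = n + Fintype.card σ by omega, Nat.choose_symm_add]

section Lagrange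

variable {K : Type*} [Field K] {X : Finset (σ → K)} {n : ℕ} {Q : (σ → K) → MvPolynomial σ K}

theorem sum_smul_mem_restrictTotalDegree (hQdeg : ∀ q ∈ X, (Q q).totalDegree ≤ n) (c : X → K) :
    ∑ p : X, c p • Q p ∈ restrictTotalDegree σ K n :=
  Submodule.sum_mem _ fun p _ =>
    Submodule.smul_mem _ _ ((mem_restrictTotalDegree _ _ _).mpr (hQdeg p p.2))

variable [DecidableEq (σ → K)]

theorem eval_sum_smul_of_lagrange
    (hQ : ∀ p ∈ X, ∀ q ∈ X, eval q (Q p) = if q = p then 1 else 0) (c : X → K) (q : X) :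
    eval (q : σ → K) (∑ p : X, c p • Q p) = c q := by
  simp [hQ _ (Subtype.prop _) _ q.2]

theorem eq_zero_of_eval_eq_zero_of_lagrange [Fintype σ]
    (hcard : (n + Fintype.card σ).choose (Fintype.card σ) ≤ X.card)
    (hQdeg : ∀ q ∈ X, (Q q).totalDegree ≤ n)
    (hQ : ∀ p ∈ X, ∀ q ∈ X, eval q (Q p) = if q = p then 1 else 0)
    {f : MvPolynomial σ K} (hf : f.totalDegree ≤ n) (hfX : ∀ q ∈ X, eval q f = 0) : f = 0 := by
  let evalX : restrictTotalDegree σ K n →ₗ[K] (X → K) :=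
    LinearMap.pi fun q => (aeval (q : σ → K)).toLinearMap ∘ₗ (restrictTotalDegree σ K n).subtype
  have hsurj : Function.Surjective evalX := fun c =>
    ⟨⟨_, sum_smul_mem_restrictTotalDegree hQdeg c⟩,
      by ext q; exact eval_sum_smul_of_lagrange hQ c q⟩
  have hdim : Module.finrank K (restrictTotalDegree σ K n) = Module.finrank K (X → K) := by
    refine le_antisymm ?_ (LinearMap.finrank_le_finrank_of_surjective hsurj)
    rw [Module.finrank_fintype_fun_eq_card, Fintype.card_coe]
    exact (finrank_restrictTotalDegree_le K n).trans hcard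
  have hinj := (LinearMap.injective_iff_surjective_of_finrank_eq_finrank hdim).mpr hsurj
  have hf0 : (⟨f, (mem_restrictTotalDegree _ _ _).mpr hf⟩ : restrictTotalDegree σ K n) = 0 :=
    hinj (by ext q; exact hfX q q.2)
  exact congrArg Subtype.val hf0

theorem eq_sum_eval_smul_of_lagrange [Fintype σ]
    (hcard : (n + Fintype.card σ).choose (Fintype.card σ) ≤ X.card)
    (hQdeg : ∀ q ∈ X, (Q q).totalDegree ≤ n)
    (hQ : ∀ p ∈ X, ∀ q ∈ X, eval q (Q p) = if q = p then 1 else 0)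
    {f : MvPolynomial σ K} (hf : f.totalDegree ≤ n) :
    f = ∑ q : X, eval (q : σ → K) f • Q q := by
  refine sub_eq_zero.mp (eq_zero_of_eval_eq_zero_of_lagrange hcard hQdeg hQ ?_ fun q hq => ?_)
  · exact (mem_restrictTotalDegree _ _ _).mp <| Submodule.sub_mem _
      ((mem_restrictTotalDegree _ _ _).mpr hf) (sum_smul_mem_restrictTotalDegree hQdeg _)
  · rw [map_sub, eval_sum_smul_of_lagrange hQ _ ⟨q, hq⟩, sub_self]

end Lagrange

section AffineForm

variable {R : Type*} [CommRing R] [Fintype σ]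

noncomputable def affineForm (a : σ → R) (c : R) : MvPolynomial σ R :=
  (∑ j, C (a j) * X j) + C c

theorem eval_affineForm (a : σ → R) (c : R) (x : σ → R) :
    eval x (affineForm a c) = a ⬝ᵥ x + c := by
  simp [affineForm, dotProduct]

theorem totalDegree_affineForm_le (a : σ → R) (c : R) : (affineForm a c).totalDegree ≤ 1 := by
  refine (totalDegree_add _ _).trans (max_le (totalDegree_finsetSum_le fun j _ => ?_) (by simp))
  rw [C_mul_X_eq_monomial]
  exact (totalDegree_monomial_le _ _).trans (by simp)

theorem totalDegree_prod_affineForm_le {ι : Type*} [Fintype ι] (L : ι → (σ → R) × R) :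
    (∏ i, affineForm (L i).1 (L i).2).totalDegree ≤ Fintype.card ι :=
  calc _ ≤ ∑ i, (affineForm (L i).1 (L i).2).totalDegree := totalDegree_finsetProd _ _
    _ ≤ ∑ _i : ι, 1 := Finset.sum_le_sum fun i _ => totalDegree_affineForm_le _ _
    _ = Fintype.card ι := by simp

theorem eval_add_prod_affineForm_eq_zero [IsDomain R] {ι : Type*} [Fintype ι]
    (L : ι → (σ → R) × R) {p w : σ → R}
    (hp : eval p (∏ i, affineForm (L i).1 (L i).2) = 0)
    (hw : ∀ i, (L i).1 ⬝ᵥ p + (L i).2 = 0 → (L i).1 ⬝ᵥ w = 0) :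
    eval (p + w) (∏ i, affineForm (L i).1 (L i).2) = 0 := by
  rw [map_prod] at hp ⊢
  obtain ⟨i, -, hi⟩ := Finset.prod_eq_zero_iff.mp hp
  rw [eval_affineForm] at hi
  refine Finset.prod_eq_zero (Finset.mem_univ i) ?_
  rw [eval_affineForm, dotProduct_add, hw i hi, add_zero, hi]

end AffineForm

end MvPolynomial

open MvPolynomial

theorem gc_linear_parts_span_general (d n : ℕ) (hn : 1 ≤ n)
    (X : Finset (Fin d → ℝ)) (hcard : X.card = (n + d).choose d)
    (l : (Fin d → ℝ) → Fin n → (Fin d → ℝ) × ℝ)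
    (Q : (Fin d → ℝ) → MvPolynomial (Fin d) ℝ)
    (hfact : ∀ q ∈ X, Q q =
      ∏ i, ((∑ j, MvPolynomial.C ((l q i).1 j) * MvPolynomial.X j) + MvPolynomial.C (l q i).2))
    (hdelta : ∀ p ∈ X, ∀ q ∈ X, eval q (Q p) = if q = p then 1 else 0)
    (p : Fin d → ℝ) (hp : p ∈ X) :
    Submodule.span ℝ
      {v : Fin d → ℝ | ∃ q ∈ X, q ≠ p ∧ ∃ i : Fin n,
        (l q i).1 = v ∧ (∑ j, v j * p j) + (l q i).2 = 0} = ⊤ := by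
  by_contra hspan
  obtain ⟨w, hw0, hw⟩ := exists_ne_zero_dotProduct_eq_zero_of_span_ne_top hspan
  have hQdeg : ∀ q ∈ X, (Q q).totalDegree ≤ n := fun q hq => by
    rw [hfact q hq]
    exact (totalDegree_prod_affineForm_le (l q)).trans_eq (Fintype.card_fin n)
  have hQ_vanish : ∀ q ∈ X, q ≠ p → eval (p + w) (Q q) = 0 := fun q hq hqp => by
    have hQ_p := hdelta q hq p hp
    rw [if_neg hqp.symm, hfact q hq] at hQ_p
    rw [hfact q hq]
    exact eval_add_prod_affineForm_eq_zero (l q) hQ_p fun i hi => hw _ ⟨q, hq, hqp, i, rfl, hi⟩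
  set f := affineForm w (-(w ⬝ᵥ p))
  have hf_p : eval p f = 0 := by rw [eval_affineForm, add_neg_cancel]
  have hf_pw : eval (p + w) f = w ⬝ᵥ w := by rw [eval_affineForm, dotProduct_add]; ring
  have hinterp := congrArg (eval (p + w)) <| eq_sum_eval_smul_of_lagrange
    (by simpa using hcard.ge) hQdeg hdelta (f := f) ((totalDegree_affineForm_le _ _).trans hn)
  rw [hf_pw, map_sum, Finset.sum_eq_zero fun q _ => ?_] at hinterp
  · exact hw0 (dotProduct_self_eq_zero.mp hinterp)
  · by_cases hqp : (q : Fin d → ℝ) = p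
    · rw [smul_eval, hqp, hf_p, zero_mul]
    · rw [smul_eval, hQ_vanish q q.2 hqp, mul_zero]

/-- For a GC_{d,n} set X (n ≥ 1, d ≥ 1) with chosen factorizations of each Q_q
into affine-linear forms (a,c) ↦ (x ↦ ∑ aᵢxᵢ + c), for each p ∈ X the linear
parts a of the factors l of the Q_q (q ≠ p) which vanish at p span ℝ^d. -/
theorem gc_linear_parts_span (d n : ℕ) (hd : 1 ≤ d) (hn : 1 ≤ n)
    (X : Finset (Fin d → ℝ)) (hcard : X.card = (n + d).choose d)
    (l : (Fin d → ℝ) → Fin n → (Fin d → ℝ) × ℝ)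
    (Q : (Fin d → ℝ) → MvPolynomial (Fin d) ℝ)
    (hfact : ∀ q ∈ X, Q q =
      ∏ i, ((∑ j, MvPolynomial.C ((l q i).1 j) * MvPolynomial.X j) + MvPolynomial.C (l q i).2))
    (hdelta : ∀ p ∈ X, ∀ q ∈ X, eval q (Q p) = if q = p then 1 else 0)
    (p : Fin d → ℝ) (hp : p ∈ X) :
    Submodule.span ℝ
      {v : Fin d → ℝ | ∃ q ∈ X, q ≠ p ∧ ∃ i : Fin n,
        (l q i).1 = v ∧ (∑ j, v j * p j) + (l q i).2 = 0} = ⊤ :=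
  gc_linear_parts_span_general d n hn X hcard l Q hfact hdelta p hp
end

section
/- Let l₁, l₂, l₃, l₄ be four pairwise independent linear forms in R[x,y,z] (four general lines). Then the columns of the 4×3 matrix d₂ with columns (l₄,−l₃,0,0)ᵀ, (0,l₃,−l₂,0)ᵀ, (0,0,l₂,−l₁)ᵀ generate the kernel (syzygy module) of the map R⁴ → R given by the row vector (l₁l₂l₃, l₁l₂l₄, l₁l₃l₄, l₂l₃l₄), provided l₁,l₂,l₃,l₄ are in general position (no two proportional, any three linearly independent... in fact any three span). -/
open MvPolynomial Matrix

/-!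
A nonzero linear form is irreducible, hence prime in the factorial ring `ℝ[x,y,z]`, and two
linearly independent forms do not divide each other. So if `v` is a syzygy of
`(l₀l₁l₂, l₀l₁l₃, l₀l₂l₃, l₁l₂l₃)`, then `l₃ ∣ v₀` and `l₀ ∣ v₃`, since every other term of the
relation is a multiple of that form. Substituting and cancelling `l₀l₃` leaves a relation
among `l₁, l₂`, which forces `l₁ ∣ v₂` and determines `v₁`: this gives the preimage under `d₂`.
-/

namespace MvPolynomial

variable {σ K : Type*} [Field K] {p q : MvPolynomial σ K}

theorem IsHomogeneous.prime_of_degree_one (hp : p.IsHomogeneous 1) (hp0 : p ≠ 0) : Prime p := by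
  refine (irreducible_of_totalDegree_eq_one (hp.totalDegree hp0) fun x hx => ?_).prime
  refine isUnit_iff_ne_zero.mpr fun hx0 => hp0 ?_
  ext m
  simpa [hx0] using hx m

theorem IsHomogeneous.exists_smul_eq_of_dvd (hp : p.IsHomogeneous 1) (hq : q.IsHomogeneous 1)
    (hpq : p ∣ q) : ∃ c : K, c • p = q := by
  obtain ⟨r, rfl⟩ := hpq
  rcases eq_or_ne (p * r) 0 with hpr | hpr
  · exact ⟨0, by simp [hpr]⟩
  have hr0 : r.totalDegree = 0 := by
    have := totalDegree_mul_of_isDomain (left_ne_zero_of_mul hpr) (right_ne_zero_of_mul hpr)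
    rw [hq.totalDegree hpr, hp.totalDegree (left_ne_zero_of_mul hpr)] at this
    omega
  exact ⟨coeff 0 r, by rw [smul_eq_C_mul, mul_comm, ← totalDegree_eq_zero_iff_eq_C.mp hr0]⟩

end MvPolynomial

section FourLines

variable {R : Type*} [CommRing R]

def tripleProducts (l : Fin 4 → R) : Matrix (Fin 1) (Fin 4) R :=
  Matrix.of fun _ j => ![l 0 * l 1 * l 2, l 0 * l 1 * l 3, l 0 * l 2 * l 3, l 1 * l 2 * l 3] j

def lineSyzygies (l : Fin 4 → R) : Matrix (Fin 4) (Fin 3) R :=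
  Matrix.of fun i j => !![l 3, 0, 0; -(l 2), l 2, 0; 0, -(l 1), l 1; 0, 0, -(l 0)] i j

theorem tripleProducts_mulVec_eq_zero_iff (l v : Fin 4 → R) :
    tripleProducts l *ᵥ v = 0 ↔
      l 0 * l 1 * l 2 * v 0 + l 0 * l 1 * l 3 * v 1 + l 0 * l 2 * l 3 * v 2
        + l 1 * l 2 * l 3 * v 3 = 0 := by
  rw [funext_iff, Fin.forall_fin_one]
  simp [tripleProducts, mulVec, dotProduct, Fin.sum_univ_four]

theorem lineSyzygies_mulVec (l : Fin 4 → R) (t : Fin 3 → R) :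
    lineSyzygies l *ᵥ t =
      ![l 3 * t 0, l 2 * (t 1 - t 0), l 1 * (t 2 - t 1), -(l 0 * t 2)] := by
  ext i
  fin_cases i <;> simp [lineSyzygies, mulVec, dotProduct, Fin.sum_univ_three] <;> ring

theorem tripleProducts_mul_lineSyzygies (l : Fin 4 → R) :
    tripleProducts l * lineSyzygies l = 0 := by
  ext i j
  fin_cases i; fin_cases j <;>
    simp [tripleProducts, lineSyzygies, Matrix.mul_apply, Fin.sum_univ_four] <;> ring

variable [IsDomain R] {l : Fin 4 → R}

theorem exists_lineSyzygies_mulVec_eq (hprime : ∀ i, Prime (l i))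
    (hndvd : Pairwise fun i j => ¬ l i ∣ l j) {v : Fin 4 → R}
    (hv : l 0 * l 1 * l 2 * v 0 + l 0 * l 1 * l 3 * v 1 + l 0 * l 2 * l 3 * v 2
        + l 1 * l 2 * l 3 * v 3 = 0) :
    ∃ t, lineSyzygies l *ᵥ t = v := by
  have h30 := hndvd (show (3 : Fin 4) ≠ 0 by decide)
  have h31 := hndvd (show (3 : Fin 4) ≠ 1 by decide)
  have h32 := hndvd (show (3 : Fin 4) ≠ 2 by decide)
  have h01 := hndvd (show (0 : Fin 4) ≠ 1 by decide)
  have h02 := hndvd (show (0 : Fin 4) ≠ 2 by decide)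
  have h03 := hndvd (show (0 : Fin 4) ≠ 3 by decide)
  have h12 := hndvd (show (1 : Fin 4) ≠ 2 by decide)
  obtain ⟨a, ha⟩ : l 3 ∣ v 0 := by
    have : l 3 ∣ l 0 * l 1 * l 2 * v 0 :=
      ⟨-(l 0 * l 1 * v 1 + l 0 * l 2 * v 2 + l 1 * l 2 * v 3), by linear_combination hv⟩
    simpa [(hprime 3).dvd_mul, h30, h31, h32] using this
  obtain ⟨d, hd⟩ : l 0 ∣ v 3 := by
    have : l 0 ∣ l 1 * l 2 * l 3 * v 3 :=
      ⟨-(l 1 * l 2 * v 0 + l 1 * l 3 * v 1 + l 2 * l 3 * v 2), by linear_combination hv⟩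
    simpa [(hprime 0).dvd_mul, h01, h02, h03] using this
  have hE : l 1 * l 2 * a + l 1 * v 1 + l 2 * v 2 + l 1 * l 2 * d = 0 := by
    refine (mul_eq_zero.mp ?_).resolve_left (mul_ne_zero (hprime 0).ne_zero (hprime 3).ne_zero)
    linear_combination hv - l 0 * l 1 * l 2 * ha - l 1 * l 2 * l 3 * hd
  obtain ⟨b, hb⟩ : l 1 ∣ v 2 := by
    have : l 1 ∣ l 2 * v 2 := ⟨-(l 2 * a + v 1 + l 2 * d), by linear_combination hE⟩
    simpa [(hprime 1).dvd_mul, h12] using this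
  have hv1 : v 1 + l 2 * (a + b + d) = 0 :=
    (mul_eq_zero.mp (by linear_combination hE - l 2 * hb)).resolve_left (hprime 1).ne_zero
  refine ⟨![a, -(b + d), -d], ?_⟩
  rw [lineSyzygies_mulVec]
  ext i
  fin_cases i <;> simp
  · linear_combination -ha
  · linear_combination -hv1
  · linear_combination -hb
  · linear_combination -hd

theorem ker_tripleProducts_eq_range_lineSyzygies (hprime : ∀ i, Prime (l i))
    (hndvd : Pairwise fun i j => ¬ l i ∣ l j) :
    LinearMap.ker (tripleProducts l).mulVecLin = LinearMap.range (lineSyzygies l).mulVecLin := by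
  ext v
  simp only [LinearMap.mem_ker, LinearMap.mem_range, mulVecLin_apply]
  constructor
  · intro hv
    exact exists_lineSyzygies_mulVec_eq hprime hndvd ((tripleProducts_mulVec_eq_zero_iff l v).mp hv)
  · rintro ⟨t, rfl⟩
    rw [mulVec_mulVec, tripleProducts_mul_lineSyzygies, zero_mulVec]

end FourLines

/-- For four homogeneous linear forms l₁,…,l₄ in ℝ[x,y,z], any three of which are
linearly independent, the kernel of d₁ = (l₁l₂l₃, l₁l₂l₄, l₁l₃l₄, l₂l₃l₄) : R⁴ → R
equals the image of the matrix d₂ with columns (l₄,−l₃,0,0), (0,l₃,−l₂,0), (0,0,l₂,−l₁). -/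
theorem syzygies_of_four_lines (l : Fin 4 → MvPolynomial (Fin 3) ℝ)
    (hhom : ∀ i, (l i).IsHomogeneous 1)
    (hgen : ∀ i j k : Fin 4, i ≠ j → i ≠ k → j ≠ k →
      LinearIndependent ℝ ![l i, l j, l k]) :
    LinearMap.ker
      ((Matrix.of (fun (_ : Fin 1) (j : Fin 4) =>
        ![l 0 * l 1 * l 2, l 0 * l 1 * l 3, l 0 * l 2 * l 3, l 1 * l 2 * l 3] j)).mulVecLin) =
    LinearMap.range
      ((Matrix.of (fun (i : Fin 4) (j : Fin 3) =>
        !![l 3, 0, 0; -(l 2), l 2, 0; 0, -(l 1), l 1; 0, 0, -(l 0)] i j)).mulVecLin) := by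
  have hnotMem : Pairwise fun i j => l j ∉ Submodule.span ℝ {l i} := by
    intro i j hij
    obtain ⟨k, hik, hjk⟩ : ∃ k, i ≠ k ∧ j ≠ k := by revert i j; decide
    simpa using (hgen i j k hij hik hjk).notMem_span_image (s := {0}) (x := 1) (by simp)
  have hne : ∀ i, l i ≠ 0 := fun i hi => by
    obtain ⟨j, hji⟩ := exists_ne i
    exact hnotMem hji (hi ▸ Submodule.zero_mem _)
  refine ker_tripleProducts_eq_range_lineSyzygies (fun i => (hhom i).prime_of_degree_one (hne i))
    fun i j hij hdvd => hnotMem hij ?_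
  obtain ⟨c, hc⟩ := (hhom i).exists_smul_eq_of_dvd (hhom j) hdvd
  exact Submodule.mem_span_singleton.mpr ⟨c, hc⟩
end
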